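/- Let p = 2, K a field of characteristic 2, N ≥ 2, and work in O(1;N). The fourth-order operator D(f,g) = f'''·g' + f'·g''' + f''·g'' from F_0 ⊗ F_0 to F_4 (= F_0 since weights are in K of char 2) is vect(1;N)-invariant: L_{h∂}(D(f,g)) = D(L_{h∂}f, g) + D(f, L_{h∂}g) for all h∂ ∈ vect(1;N), where the weight is 0 on both sources. -/

import Mathlib

open Finset

/-- Multiplication in the divided power algebra `O(1;N)` truncated at `n = p^N`;
elements are given by their coefficients in the basis `u^{(r)}`, `0 ≤ r < n`,
and `u^{(r)} · u^{(s)} = C(r+s, r) u^{(r+s)}` (zero if `r+s ≥ n`). -/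
def dpMul {K : Type*} [Field K] (n : ℕ) (f g : ℕ → K) : ℕ → K :=
  fun t => if t < n then ∑ i ∈ Finset.range (t + 1), ((t.choose i : K) * f i * g (t - i)) else 0

/-- The distinguished derivation `∂` of `O(1;N)`: `∂(u^{(r)}) = u^{(r-1)}`. -/
def dpDer {K : Type*} [Field K] (n : ℕ) (f : ℕ → K) : ℕ → K :=
  fun r => if r + 1 < n then f (r + 1) else 0

/-- Membership in `O(1;N)`: coefficients vanish in degrees `≥ n`. -/
def dpSupp {K : Type*} [Field K] (n : ℕ) (f : ℕ → K) : Prop := ∀ r, n ≤ r → f r = 0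

/-- Berezin-type integral: the coefficient of `u^{(n-1)}`. -/
def dpInt {K : Type*} [Field K] (n : ℕ) (f : ℕ → K) : K := f (n - 1)

/-- Lie derivative along `h∂ ∈ vect(1;N)` acting on the weighted density module
`F_a`: `L_{h∂}(f) = h·∂f + a·f·∂h`. -/
def dpLie {K : Type*} [Field K] (n : ℕ) (a : K) (h f : ℕ → K) : ℕ → K :=
  dpMul n h (dpDer n f) + a • dpMul n f (dpDer n h)

/-! Both weights vanish in `K` (`4 = 0`), so every Lie derivative is `X ↦ h · ∂X`.
In characteristic `2` a derivation satisfies `∂²(ab) = ∂²a · b + a · ∂²b`, so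
`D(f, g) = ∂²(f' g') + f'' g''`, and the invariance becomes a formal consequence of the Leibniz
rule in any commutative (possibly non-unital) ring with `2 = 0`. For the truncated divided-power
product the Leibniz rule survives the truncation at `p ^ N` because `p ∣ C(p ^ N, i)` for
`0 < i < p ^ N`. -/

section CharTwoDerivation

variable {R : Type*} [NonUnitalCommRing R]

def gz22 (d : R → R) (f g : R) : R :=
  d^[3] f * d^[1] g + d^[1] f * d^[3] g + d^[2] f * d^[2] g

theorem dd_mul_of_add_self {d : R → R} (d_add : ∀ a b, d (a + b) = d a + d b)
    (d_mul : ∀ a b, d (a * b) = d a * b + a * d b) (two : ∀ x : R, x + x = 0) (a b : R) :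
    d (d (a * b)) = d (d a) * b + a * d (d b) :=
  calc d (d (a * b)) = d (d a) * b + a * d (d b) + (d a * d b + d a * d b) := by
        rw [d_mul, d_add, d_mul, d_mul]; abel
    _ = d (d a) * b + a * d (d b) := by rw [two, add_zero]

theorem d_mul_mul_add_mul_d_mul {d : R → R} (d_mul : ∀ a b, d (a * b) = d a * b + a * d b)
    (two : ∀ x : R, x + x = 0) (h a b : R) :
    d (h * a) * b + a * d (h * b) = h * d (a * b) :=
  calc d (h * a) * b + a * d (h * b) = h * d (a * b) + (d h * a * b + d h * a * b) := by
        rw [d_mul, d_mul, d_mul]; simp only [mul_add, mul_comm, mul_left_comm]; abel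
    _ = h * d (a * b) := by rw [two, add_zero]

theorem gz22_eq_dd_mul_add_mul {d : R → R} (d_add : ∀ a b, d (a + b) = d a + d b)
    (d_mul : ∀ a b, d (a * b) = d a * b + a * d b) (two : ∀ x : R, x + x = 0) (f g : R) :
    gz22 d f g = d (d (d f * d g)) + d (d f) * d (d g) := by
  rw [dd_mul_of_add_self d_add d_mul two]; rfl

theorem gz22_invariant {d : R → R} (d_add : ∀ a b, d (a + b) = d a + d b)
    (d_mul : ∀ a b, d (a * b) = d a * b + a * d b) (two : ∀ x : R, x + x = 0) (h f g : R) :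
    h * d (gz22 d f g) = gz22 d (h * d f) g + gz22 d f (h * d g) := by
  have dd := dd_mul_of_add_self d_add d_mul two
  simp only [gz22_eq_dd_mul_add_mul d_add d_mul two]
  set φ := d f
  set γ := d g
  -- the Leibniz rule produces the terms `∂²h · ∂(φγ)` twice on the right-hand side
  calc h * d (d (d (φ * γ)) + d φ * d γ)
      = h * d (d (d (φ * γ))) + h * d (d φ * d γ) + d (d h) * (d (φ * γ) + d (φ * γ)) := by
        rw [two, mul_zero, add_zero, d_add, mul_add]
    _ = d (d (h * d (φ * γ))) + d (d (h * φ)) * d γ + d φ * d (d (h * γ)) := by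
        rw [dd h, dd h, dd h, d_mul (d φ)]
        simp only [d_mul φ γ, mul_add, mul_comm, mul_left_comm]
        abel
    _ = d (d (d (h * φ) * γ)) + d (d (h * φ)) * d γ
          + (d (d (φ * d (h * γ))) + d φ * d (d (h * γ))) := by
        rw [← d_mul_mul_add_mul_d_mul d_mul two, d_add, d_add]
        abel

end CharTwoDerivation

section BinomialConvolution

variable {R : Type*} [CommSemiring R]

def binomConv (a b : ℕ → R) (t : ℕ) : R :=
  ∑ x ∈ antidiagonal t, (t.choose x.1 : R) * a x.1 * b x.2

theorem binomConv_congr {a a' b b' : ℕ → R} {t : ℕ} (ha : ∀ i ≤ t, a i = a' i)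
    (hb : ∀ i ≤ t, b i = b' i) : binomConv a b t = binomConv a' b' t :=
  sum_congr rfl fun x hx => by
    rw [ha _ (HasAntidiagonal.antidiagonal.fst_le hx),
      hb _ (HasAntidiagonal.antidiagonal.snd_le hx)]

theorem binomConv_comm (a b : ℕ → R) (t : ℕ) : binomConv a b t = binomConv b a t := by
  rw [binomConv, ← Nat.sum_antidiagonal_swap]
  refine sum_congr rfl fun x hx => ?_
  rw [Prod.fst_swap, Prod.snd_swap,
    ← Nat.choose_symm_of_eq_add (HasAntidiagonal.mem_antidiagonal.mp hx).symm]
  ring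

theorem binomConv_add_left (a b c : ℕ → R) (t : ℕ) :
    binomConv (a + b) c t = binomConv a c t + binomConv b c t := by
  simp only [binomConv, Pi.add_apply, mul_add, add_mul, sum_add_distrib]

theorem choose_mul_choose_add (i j k : ℕ) :
    (i + j + k).choose (i + j) * (i + j).choose i = (i + j + k).choose i * (j + k).choose j := by
  rw [Nat.choose_mul (Nat.le_add_right i j)]
  congr 2 <;> omega

theorem binomConv_assoc (a b c : ℕ → R) (t : ℕ) :
    binomConv (binomConv a b) c t = binomConv a (binomConv b c) t := by
  simp only [binomConv, sum_mul, mul_sum, sum_sigma']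
  apply sum_nbij' (fun ⟨⟨_, k⟩, ⟨i, j⟩⟩ ↦ ⟨(i, j + k), (j, k)⟩)
    (fun ⟨⟨i, _⟩, ⟨j, k⟩⟩ ↦ ⟨(i + j, k), (i, j)⟩)
  all_goals
    rintro ⟨⟨_, _⟩, ⟨i, j⟩⟩ hx
    simp only [mem_sigma, HasAntidiagonal.mem_antidiagonal] at hx
    obtain ⟨rfl, rfl⟩ := hx
  · simp [add_assoc]
  · simp [add_assoc]
  · rfl
  · rfl
  · dsimp only
    rw [← mul_assoc, ← mul_assoc, ← Nat.cast_mul, choose_mul_choose_add, Nat.cast_mul]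
    ring

theorem binomConv_succ (a b : ℕ → R) (t : ℕ) :
    binomConv a b (t + 1)
      = binomConv (fun i => a (i + 1)) b t + binomConv a (fun i => b (i + 1)) t := by
  simp only [binomConv, sum_antidiagonal_choose_succ_mul (fun i j => a i * b j), mul_assoc]
  rw [add_comm]
  congr 1
  refine sum_congr rfl fun x hx => ?_
  rw [← Nat.choose_symm_of_eq_add (HasAntidiagonal.mem_antidiagonal.mp hx).symm]

theorem binomConv_prime_pow_eq_zero {p : ℕ} [Fact p.Prime] [CharP R p] (N : ℕ) {a b : ℕ → R}
    (ha : a (p ^ N) = 0) (hb : b (p ^ N) = 0) : binomConv a b (p ^ N) = 0 := by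
  refine sum_eq_zero fun x hx => ?_
  rcases x with ⟨i, j⟩
  have hij : i + j = p ^ N := HasAntidiagonal.mem_antidiagonal.mp hx
  dsimp only
  by_cases hi : i = 0
  · rw [show j = p ^ N by omega, hb, mul_zero]
  by_cases hj : j = 0
  · rw [show i = p ^ N by omega, ha, mul_zero, zero_mul]
  have hdvd : p ∣ (p ^ N).choose i := (Fact.out : p.Prime).dvd_choose_pow hi (by omega)
  rw [(CharP.cast_eq_zero_iff R p _).mpr hdvd, zero_mul, zero_mul]

end BinomialConvolution

section DividedPowerAlgebra

variable {K : Type*} [Field K]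

theorem dpMul_apply (n : ℕ) (a b : ℕ → K) (t : ℕ) :
    dpMul n a b t = if t < n then binomConv a b t else 0 := by
  rw [dpMul, binomConv,
    Nat.sum_antidiagonal_eq_sum_range_succ (fun i j => (t.choose i : K) * a i * b j)]

theorem binomConv_dpMul_left {n t : ℕ} (ht : t < n) (a b c : ℕ → K) :
    binomConv (dpMul n a b) c t = binomConv (binomConv a b) c t :=
  binomConv_congr (fun i hi => by rw [dpMul_apply, if_pos (by omega)]) fun _ _ => rfl

theorem dpMul_comm (n : ℕ) (a b : ℕ → K) : dpMul n a b = dpMul n b a := by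
  funext t
  simp only [dpMul_apply, binomConv_comm a]

theorem dpMul_assoc (n : ℕ) (a b c : ℕ → K) :
    dpMul n (dpMul n a b) c = dpMul n a (dpMul n b c) := by
  funext t
  rw [dpMul_apply, dpMul_apply]
  split_ifs with ht
  · rw [binomConv_dpMul_left ht, binomConv_comm a, binomConv_dpMul_left ht, binomConv_assoc,
      binomConv_comm, binomConv_assoc]
  · rfl

theorem dpMul_add_left (n : ℕ) (a b c : ℕ → K) :
    dpMul n (a + b) c = dpMul n a c + dpMul n b c := by
  funext t
  simp only [dpMul_apply, Pi.add_apply, binomConv_add_left]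
  split_ifs <;> simp

theorem dpMul_add_right (n : ℕ) (a b c : ℕ → K) :
    dpMul n a (b + c) = dpMul n a b + dpMul n a c := by
  simp only [dpMul_comm n a, dpMul_add_left]

theorem dpMul_zero_left (n : ℕ) (b : ℕ → K) : dpMul n 0 b = 0 := by
  funext t
  simp [dpMul]

theorem dpMul_zero_right (n : ℕ) (a : ℕ → K) : dpMul n a 0 = 0 := by
  rw [dpMul_comm, dpMul_zero_left]

theorem dpDer_add (n : ℕ) (a b : ℕ → K) : dpDer n (a + b) = dpDer n a + dpDer n b := by
  funext r
  simp only [dpDer, Pi.add_apply]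
  split_ifs <;> simp

theorem dpDer_dpMul {p : ℕ} [Fact p.Prime] [CharP K p] (N : ℕ) (a b : ℕ → K) :
    dpDer (p ^ N) (dpMul (p ^ N) a b)
      = dpMul (p ^ N) (dpDer (p ^ N) a) b + dpMul (p ^ N) a (dpDer (p ^ N) b) := by
  set n := p ^ N
  set ta : ℕ → K := fun i => if i < n then a i else 0
  set tb : ℕ → K := fun i => if i < n then b i else 0
  have hta : ∀ i < n, a i = ta i := fun i hi => (if_pos hi).symm
  have htb : ∀ i < n, b i = tb i := fun i hi => (if_pos hi).symm
  -- `dpDer n a` is the shift of the truncation `ta`, definitionally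
  have leibniz : ∀ r < n,
      binomConv (dpDer n a) b r + binomConv a (dpDer n b) r = binomConv ta tb (r + 1) := by
    intro r hr
    rw [binomConv_succ]
    congr 1
    · exact binomConv_congr (fun _ _ => rfl) fun i _ => htb i (by omega)
    · exact binomConv_congr (fun i _ => hta i (by omega)) fun _ _ => rfl
  funext r
  simp only [dpDer, Pi.add_apply, dpMul_apply]
  by_cases hr : r + 1 < n
  · have hr' : r < n := by omega
    rw [if_pos hr, if_pos hr, if_pos hr', if_pos hr', leibniz r hr']
    exact binomConv_congr (t := r + 1) (fun i _ => hta i (by omega)) fun i _ => htb i (by omega)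
  by_cases hr' : r < n
  · rw [if_neg hr, if_pos hr', if_pos hr', leibniz r hr', show r + 1 = p ^ N by omega,
      binomConv_prime_pow_eq_zero N (if_neg (by omega)) (if_neg (by omega))]
  · rw [if_neg hr, if_neg hr', if_neg hr', add_zero]

theorem dpLie_of_weight_eq_zero {a : K} (ha : a = 0) (n : ℕ) (h f : ℕ → K) :
    dpLie n a h f = dpMul n h (dpDer n f) := by
  rw [dpLie, ha, zero_smul, add_zero]

/-- `O(1;N)` extended to all coefficient sequences: `dpMul n` ignores coefficients in degrees
`≥ n`, so these form a square-zero ideal and the product is not unital. -/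
def DividedPowerAlg (K : Type*) (_ : ℕ) : Type _ := ℕ → K

instance (n : ℕ) : NonUnitalCommRing (DividedPowerAlg K n) where
  __ := (inferInstance : AddCommGroup (ℕ → K))
  mul := dpMul n
  left_distrib := dpMul_add_right n
  right_distrib := dpMul_add_left n
  zero_mul := dpMul_zero_left n
  mul_zero := dpMul_zero_right n
  mul_assoc := dpMul_assoc n
  mul_comm := dpMul_comm n

end DividedPowerAlgebra

theorem gz22_dd_invariant_general {K : Type*} [Field K] (N : ℕ) [CharP K 2]
    (h f g : ℕ → K) :
    dpLie (2 ^ N) (4 : K) h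
        (dpMul (2 ^ N) ((dpDer (2 ^ N))^[3] f) ((dpDer (2 ^ N))^[1] g)
          + dpMul (2 ^ N) ((dpDer (2 ^ N))^[1] f) ((dpDer (2 ^ N))^[3] g)
          + dpMul (2 ^ N) ((dpDer (2 ^ N))^[2] f) ((dpDer (2 ^ N))^[2] g))
      = (dpMul (2 ^ N) ((dpDer (2 ^ N))^[3] (dpLie (2 ^ N) 0 h f)) ((dpDer (2 ^ N))^[1] g)
          + dpMul (2 ^ N) ((dpDer (2 ^ N))^[1] (dpLie (2 ^ N) 0 h f)) ((dpDer (2 ^ N))^[3] g)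
          + dpMul (2 ^ N) ((dpDer (2 ^ N))^[2] (dpLie (2 ^ N) 0 h f)) ((dpDer (2 ^ N))^[2] g))
        + (dpMul (2 ^ N) ((dpDer (2 ^ N))^[3] f) ((dpDer (2 ^ N))^[1] (dpLie (2 ^ N) 0 h g))
          + dpMul (2 ^ N) ((dpDer (2 ^ N))^[1] f) ((dpDer (2 ^ N))^[3] (dpLie (2 ^ N) 0 h g))
          + dpMul (2 ^ N) ((dpDer (2 ^ N))^[2] f) ((dpDer (2 ^ N))^[2] (dpLie (2 ^ N) 0 h g))) := by
  have h4 : (4 : K) = 0 := by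
    rw [show (4 : K) = 2 * 2 by norm_num, CharTwo.two_eq_zero, zero_mul]
  simp only [dpLie_of_weight_eq_zero h4, dpLie_of_weight_eq_zero rfl]
  exact gz22_invariant (R := DividedPowerAlg K (2 ^ N)) (d := dpDer (2 ^ N)) (dpDer_add _)
    (dpDer_dpMul N) (fun x => funext fun r => CharTwo.add_self_eq_zero (x r)) h f g

/-- The fourth-order operator D(f,g) = f'''·g' + f'·g''' + f''·g'' in
characteristic 2, namely Gz_{2,2}(df, dg) : F_0 ⊗ F_0 → F_4, is
vect(1;N)-invariant for N ≥ 2. -/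
theorem gz22_dd_invariant {K : Type*} [Field K] (N : ℕ) (hN : 2 ≤ N)
    [CharP K 2] (h f g : ℕ → K)
    (hh : dpSupp (2 ^ N) h) (hf : dpSupp (2 ^ N) f) (hg : dpSupp (2 ^ N) g) :
    dpLie (2 ^ N) (4 : K) h
        (dpMul (2 ^ N) ((dpDer (2 ^ N))^[3] f) ((dpDer (2 ^ N))^[1] g)
          + dpMul (2 ^ N) ((dpDer (2 ^ N))^[1] f) ((dpDer (2 ^ N))^[3] g)
          + dpMul (2 ^ N) ((dpDer (2 ^ N))^[2] f) ((dpDer (2 ^ N))^[2] g))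
      = (dpMul (2 ^ N) ((dpDer (2 ^ N))^[3] (dpLie (2 ^ N) 0 h f)) ((dpDer (2 ^ N))^[1] g)
          + dpMul (2 ^ N) ((dpDer (2 ^ N))^[1] (dpLie (2 ^ N) 0 h f)) ((dpDer (2 ^ N))^[3] g)
          + dpMul (2 ^ N) ((dpDer (2 ^ N))^[2] (dpLie (2 ^ N) 0 h f)) ((dpDer (2 ^ N))^[2] g))
        + (dpMul (2 ^ N) ((dpDer (2 ^ N))^[3] f) ((dpDer (2 ^ N))^[1] (dpLie (2 ^ N) 0 h g))
          + dpMul (2 ^ N) ((dpDer (2 ^ N))^[1] f) ((dpDer (2 ^ N))^[3] (dpLie (2 ^ N) 0 h g))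
          + dpMul (2 ^ N) ((dpDer (2 ^ N))^[2] f) ((dpDer (2 ^ N))^[2] (dpLie (2 ^ N) 0 h g))) :=
  gz22_dd_invariant_general N h f g
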